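/- Let d be a positive natural number, let (E_k)_{k ∈ K} be a finite family of effects in Matrix (Fin d) (Fin d) ℂ (each E_k and 1 − E_k positive semidefinite) with ∑_k E_k = 1, and let B ∈ Matrix (Fin d) (Fin d) ℂ be an effect. If both ∑_k E_k^{1/2} B E_k^{1/2} = B and ∑_k E_k^{1/2} B² E_k^{1/2} = B², then E_k B = B E_k for all k ∈ K. -/

import Mathlib

open scoped ComplexOrder Matrix

/-- The positive semidefinite square root of a positive semidefinite matrix
(the definition `Matrix.PosSemidef.sqrt` of the older Mathlib, since removed). -/
noncomputable def Matrix.PosSemidef.sqrt {n 𝕜 : Type*} [Fintype n] [RCLike 𝕜] [DecidableEq n]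
    {A : Matrix n n 𝕜} (hA : A.PosSemidef) : Matrix n n 𝕜 :=
  hA.1.eigenvectorUnitary.1 * Matrix.diagonal ((↑) ∘ (√·) ∘ hA.1.eigenvalues) *
  (star hA.1.eigenvectorUnitary : Matrix n n 𝕜)

/-!
Write `S_k = E_k^{1/2}` and `C_k = [S_k, B]`. Since `S_k` and `B` are self-adjoint,
`C_k⋆ C_k = B S_k² B - B (S_k B S_k) - (S_k B S_k) B + S_k B² S_k`, so summing over `k` and
using `∑ S_k² = 1` together with the two invariance hypotheses gives `∑ C_k⋆ C_k = 0`.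
A vanishing sum of positive semidefinite matrices `C_k⋆ C_k` forces every `C_k = 0`; hence `S_k`,
and with it `E_k = S_k²`, commutes with `B`.
-/

theorem sum_star_lie_mul_lie {R ι : Type*} [Ring R] [StarRing R] [Fintype ι]
    {s : ι → R} {b : R} (hs : ∀ k, IsSelfAdjoint (s k)) (hb : IsSelfAdjoint b) :
    ∑ k, star ⁅s k, b⁆ * ⁅s k, b⁆ =
      b * (∑ k, s k * s k) * b - b * (∑ k, s k * b * s k) - (∑ k, s k * b * s k) * b
        + ∑ k, s k * (b * b) * s k := by
  have expand : ∀ k, star ⁅s k, b⁆ * ⁅s k, b⁆ =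
      b * (s k * s k) * b - b * (s k * b * s k) - (s k * b * s k) * b + s k * (b * b) * s k := by
    intro k
    rw [Ring.lie_def, star_sub, star_mul, star_mul, (hs k).star_eq, hb.star_eq]
    noncomm_ring
  simp only [expand, Finset.sum_add_distrib, Finset.sum_sub_distrib, Finset.mul_sum,
    Finset.sum_mul]

namespace Matrix

open scoped MatrixOrder

variable {m n 𝕜 ι : Type*} [Fintype m] [Fintype n] [RCLike 𝕜] [Fintype ι]

theorem eq_zero_of_sum_conjTranspose_mul_self_eq_zero {C : ι → Matrix m n 𝕜}
    (h : ∑ k, (C k)ᴴ * C k = 0) (k : ι) : C k = 0 := by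
  have hk := (Finset.sum_eq_zero_iff_of_nonneg fun j _ ↦
    (posSemidef_conjTranspose_mul_self (C j)).nonneg).mp h k (Finset.mem_univ k)
  exact conjTranspose_mul_self_eq_zero.mp hk

theorem commute_of_sum_mul_mul_eq_self [DecidableEq n] {s : ι → Matrix n n 𝕜}
    {B : Matrix n n 𝕜}
    (hs : ∀ k, (s k).IsHermitian) (hB : B.IsHermitian) (hsum : ∑ k, s k * s k = 1)
    (h1 : ∑ k, s k * B * s k = B) (h2 : ∑ k, s k * (B * B) * s k = B * B) (k : ι) :
    Commute (s k) B := by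
  have hzero : ∑ k, star ⁅s k, B⁆ * ⁅s k, B⁆ = 0 := by
    rw [sum_star_lie_mul_lie (fun k ↦ (hs k).isSelfAdjoint) hB.isSelfAdjoint, hsum, h1, h2]
    noncomm_ring
  exact commute_iff_lie_eq.mpr (eq_zero_of_sum_conjTranspose_mul_self_eq_zero hzero k)

namespace PosSemidef

variable [DecidableEq n] {A : Matrix n n 𝕜}

theorem sqrt_eq_cfcSqrt (hA : A.PosSemidef) : hA.sqrt = CFC.sqrt A := by
  rw [CFC.sqrt_eq_cfc, cfc_nnreal_eq_real _ A, hA.1.cfc_eq]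
  simp [IsHermitian.cfc, PosSemidef.sqrt, Function.comp_def, hA.eigenvalues_nonneg]

theorem isHermitian_sqrt (hA : A.PosSemidef) : hA.sqrt.IsHermitian := by
  rw [sqrt_eq_cfcSqrt]
  exact (nonneg_iff_posSemidef.mp (CFC.sqrt_nonneg A)).isHermitian

theorem sqrt_mul_self (hA : A.PosSemidef) : hA.sqrt * hA.sqrt = A := by
  rw [sqrt_eq_cfcSqrt]
  exact CFC.sqrt_mul_sqrt_self A hA.nonneg

end PosSemidef

end Matrix

theorem generalized_lueders_squared_general
    (d : ℕ) (K : Type) [Fintype K]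
    (E : K → Matrix (Fin d) (Fin d) ℂ)
    (hE : ∀ k, (E k).PosSemidef)
    (hsum : ∑ k, E k = 1)
    (B : Matrix (Fin d) (Fin d) ℂ) (hB : B.PosSemidef)
    (h1 : ∑ k, (hE k).sqrt * B * (hE k).sqrt = B)
    (h2 : ∑ k, (hE k).sqrt * (B * B) * (hE k).sqrt = B * B) :
    ∀ k, E k * B = B * E k := by
  intro k
  have hsqrt : ∑ k, (hE k).sqrt * (hE k).sqrt = 1 := by
    simpa only [Matrix.PosSemidef.sqrt_mul_self] using hsum
  have hcomm := Matrix.commute_of_sum_mul_mul_eq_self (fun k ↦ (hE k).isHermitian_sqrt)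
    hB.isHermitian hsqrt h1 h2 k
  rw [← (hE k).sqrt_mul_self]
  exact (hcomm.mul_left hcomm).eq

/-- Generalized Lüders theorem under assumption (III): if the nonselective
generalized Lüders operation of the discrete observable `(E_k)` leaves both `B`
and `B²` undisturbed, then every `E_k` commutes with `B`. -/
theorem generalized_lueders_squared
    (d : ℕ) (hd : 0 < d) (K : Type) [Fintype K]
    (E : K → Matrix (Fin d) (Fin d) ℂ)
    (hE : ∀ k, (E k).PosSemidef) (hE' : ∀ k, (1 - E k).PosSemidef)
    (hsum : ∑ k, E k = 1)
    (B : Matrix (Fin d) (Fin d) ℂ) (hB : B.PosSemidef) (hB' : (1 - B).PosSemidef)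
    (h1 : ∑ k, (hE k).sqrt * B * (hE k).sqrt = B)
    (h2 : ∑ k, (hE k).sqrt * (B * B) * (hE k).sqrt = B * B) :
    ∀ k, E k * B = B * E k :=
  generalized_lueders_squared_general d K E hE hsum B hB h1 h2
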